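/- arXiv:2401.01528 — 2 statements merged into one kernel-verified Lean document; each statement's English description precedes it below -/
import Mathlib

section
/- In the player-proposing deferred acceptance algorithm with N players and K arms, the arm each player is matched to upon termination lies among the first min{N, K} arms in that player's preference list. -/
open Finset

/-- Some element of `S` minimizing `r` (or `none` if `S` is empty). -/
noncomputable def argminOf {α : Type*} (S : Finset α) (r : α → ℕ) : Option α :=
  if h : S.Nonempty then some (S.exists_min_image r h).choose else none

/-- One round of the player-proposing deferred acceptance algorithm (one-to-one market):
the state records, for each player, the set of arms that have rejected it so far. -/
noncomputable def daStep {N K : ℕ} (pRank : Fin N → Fin K → ℕ) (aRank : Fin K → Fin N → ℕ)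
    (rej : Fin N → Finset (Fin K)) : Fin N → Finset (Fin K) := fun p =>
  match argminOf (Finset.univ \ rej p) (pRank p) with
  | none => rej p
  | some a =>
      if argminOf (Finset.univ.filter
            (fun q : Fin N => argminOf (Finset.univ \ rej q) (pRank q) = some a)) (aRank a)
          = some p then
        rej p
      else insert a (rej p)

lemma argminOf_spec {α : Type*} {S : Finset α} {r : α → ℕ} {a : α}
    (h : argminOf S r = some a) : a ∈ S ∧ ∀ b ∈ S, r a ≤ r b := by
  by_cases hS : S.Nonempty
  · rw [argminOf, dif_pos hS] at h
    have hspec := (S.exists_min_image r hS).choose_spec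
    injection h with h'
    subst h'
    exact hspec
  · rw [argminOf, dif_neg hS] at h
    exact absurd h (by simp)

lemma argminOf_isSome {α : Type*} {S : Finset α} (r : α → ℕ)
    (hS : S.Nonempty) : ∃ a, argminOf S r = some a := by
  unfold argminOf
  rw [dif_pos hS]
  exact ⟨_, rfl⟩

section invariants

variable {N K : ℕ} (pRank : Fin N → Fin K → ℕ) (aRank : Fin K → Fin N → ℕ)

/-- Case analysis for one step of DA at a player. -/
lemma daStep_cases (s : Fin N → Finset (Fin K)) (q : Fin N) :
    daStep pRank aRank s q = s q ∨
    ∃ b, argminOf (Finset.univ \ s q) (pRank q) = some b ∧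
      daStep pRank aRank s q = insert b (s q) := by
  rcases h : argminOf (Finset.univ \ s q) (pRank q) with _ | b
  · left; simp [daStep, h]
  · by_cases hw : argminOf (Finset.univ.filter
        (fun q' : Fin N => argminOf (Finset.univ \ s q') (pRank q') = some b)) (aRank b)
        = some q
    · left; simp [daStep, h, hw]
    · right; exact ⟨b, rfl, by simp [daStep, h, hw]⟩

/-- If some player currently proposes to arm `a`, then after one step some player
still proposes to `a` (the winner at `a` keeps its state). -/
lemma winner_keeps (s : Fin N → Finset (Fin K)) (a : Fin K)
    (h : ∃ q, argminOf (Finset.univ \ s q) (pRank q) = some a) :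
    ∃ w, argminOf (Finset.univ \ daStep pRank aRank s w) (pRank w) = some a := by
  obtain ⟨q, hq⟩ := h
  set W := Finset.univ.filter
      (fun q' : Fin N => argminOf (Finset.univ \ s q') (pRank q') = some a) with hW
  have hWne : W.Nonempty := ⟨q, by simp [hW, hq]⟩
  obtain ⟨w, hw⟩ := argminOf_isSome (aRank a) hWne
  have hwW : w ∈ W := (argminOf_spec hw).1
  have hwprop : argminOf (Finset.univ \ s w) (pRank w) = some a := by
    simpa [hW] using hwW
  have hstep : daStep pRank aRank s w = s w := by
    simp only [daStep, hwprop, ← hW]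
    rw [if_pos hw]
  exact ⟨w, by rw [hstep]; exact hwprop⟩

def DInv (s : Fin N → Finset (Fin K)) : Prop :=
  ∀ q (b c : Fin K), b ∈ s q → pRank q c < pRank q b → c ∈ s q

def QInv (s : Fin N → Finset (Fin K)) : Prop :=
  ∀ q (b : Fin K), b ∈ s q → ∃ q', argminOf (Finset.univ \ s q') (pRank q') = some b

lemma DInv_step {s : Fin N → Finset (Fin K)} (hD : DInv pRank s) :
    DInv pRank (daStep pRank aRank s) := by
  intro q b c hb hlt
  rcases daStep_cases pRank aRank s q with h | ⟨x, hx, h⟩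
  · rw [h] at hb ⊢; exact hD q b c hb hlt
  · rw [h] at hb ⊢
    rcases Finset.mem_insert.mp hb with rfl | hb
    · -- b = x is the argmin of the complement; c preferred to it must be in s q
      by_contra hc
      have hcmem : c ∈ Finset.univ \ s q := by
        simp [Finset.mem_sdiff, fun h' => hc (Finset.mem_insert_of_mem h')]
        intro h'; exact hc (Finset.mem_insert_of_mem h')
      have := (argminOf_spec hx).2 c hcmem
      omega
    · exact Finset.mem_insert_of_mem (hD q b c hb hlt)

lemma QInv_step {s : Fin N → Finset (Fin K)} (hQ : QInv pRank s) :
    QInv pRank (daStep pRank aRank s) := by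
  intro q b hb
  rcases daStep_cases pRank aRank s q with h | ⟨x, hx, h⟩
  · rw [h] at hb
    exact winner_keeps pRank aRank s b (hQ q b hb)
  · rw [h] at hb
    rcases Finset.mem_insert.mp hb with rfl | hb
    · exact winner_keeps pRank aRank s b ⟨q, hx⟩
    · exact winner_keeps pRank aRank s b (hQ q b hb)

lemma invariants_iterate (τ : ℕ) :
    DInv pRank ((daStep pRank aRank)^[τ] (fun _ => (∅ : Finset (Fin K)))) ∧
    QInv pRank ((daStep pRank aRank)^[τ] (fun _ => (∅ : Finset (Fin K)))) := by
  induction τ with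
  | zero =>
      constructor
      · intro q b c hb _; simp at hb
      · intro q b hb; simp at hb
  | succ n ih =>
      rw [Function.iterate_succ_apply']
      exact ⟨DInv_step pRank aRank ih.1, QInv_step pRank aRank ih.2⟩

end invariants

/-- at termination of player-proposing DA (a fixed point reached from the
initial empty-rejection state), the arm each player is matched with lies among the first
`min N K` arms of that player's preference list, i.e. fewer than `min N K` arms are
strictly preferred to it by that player. -/
theorem da_matched_arm_in_top_min {N K : ℕ}
    (pRank : Fin N → Fin K → ℕ) (aRank : Fin K → Fin N → ℕ)
    (hp : ∀ p, Function.Injective (pRank p)) (ha : ∀ a, Function.Injective (aRank a))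
    (τ : ℕ) (rej : Fin N → Finset (Fin K))
    (hreach : rej = (daStep pRank aRank)^[τ] (fun _ => (∅ : Finset (Fin K))))
    (hfix : Function.IsFixedPt (daStep pRank aRank) rej)
    (p : Fin N) (a : Fin K)
    (hmatch : argminOf (Finset.univ \ rej p) (pRank p) = some a) :
    (Finset.univ.filter (fun b : Fin K => pRank p b < pRank p a)).card < min N K := by
  have hD : DInv pRank rej := hreach ▸ (invariants_iterate pRank aRank τ).1
  have hQ : QInv pRank rej := hreach ▸ (invariants_iterate pRank aRank τ).2
  have haSpec := argminOf_spec hmatch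
  have haNot : a ∉ rej p := (Finset.mem_sdiff.mp haSpec.1).2
  -- the set of arms strictly preferred to `a` by `p` is exactly `rej p`
  have hset : Finset.univ.filter (fun b : Fin K => pRank p b < pRank p a) = rej p := by
    ext b
    simp only [Finset.mem_filter, Finset.mem_univ, true_and]
    constructor
    · intro hlt
      by_contra hb
      have := haSpec.2 b (by simp [hb])
      omega
    · intro hb
      have hne : b ≠ a := fun h => haNot (h ▸ hb)
      have hne' : pRank p b ≠ pRank p a := fun h => hne (hp p h)
      rcases lt_or_gt_of_ne hne' with h | h
      · exact h
      · exact absurd (hD p b a hb h) haNot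
  rw [hset]
  have hNpos : 0 < N := p.pos
  have hKpos : 0 < K := a.pos
  refine lt_min ?_ ?_
  · -- fewer than N: each rejected arm has a distinct current proposer, none equal to p
    classical
    have hmapsto : ∀ b ∈ rej p, ∃ q, argminOf (Finset.univ \ rej q) (pRank q) = some b :=
      fun b hb => hQ p b hb
    set f : Fin K → Fin N := fun b =>
      if h : ∃ q, argminOf (Finset.univ \ rej q) (pRank q) = some b then h.choose else p
      with hf
    have hfprop : ∀ b ∈ rej p, argminOf (Finset.univ \ rej (f b)) (pRank (f b)) = some b := by
      intro b hb
      have h := hmapsto b hb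
      simp only [hf, dif_pos h]
      exact h.choose_spec
    have hcard : (rej p).card ≤ (Finset.univ.erase p).card := by
      apply Finset.card_le_card_of_injOn f
      · intro b hb
        refine Finset.mem_erase.mpr ⟨?_, Finset.mem_univ _⟩
        intro hfb
        have h1 := hfprop b hb
        rw [hfb, hmatch] at h1
        cases Option.some.inj h1
        exact haNot hb
      · intro b hb b' hb' hbb
        have h1 := hfprop b hb
        have h2 := hfprop b' hb'
        rw [hbb] at h1
        rw [h1] at h2
        exact Option.some.inj h2
    calc (rej p).card ≤ (Finset.univ.erase p).card := hcard
      _ = N - 1 := by rw [Finset.card_erase_of_mem (Finset.mem_univ p)]; simp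
      _ < N := Nat.sub_lt hNpos one_pos
  · -- fewer than K: arm `a` itself is not rejected
    have : rej p ⊂ Finset.univ :=
      Finset.ssubset_univ_iff.mpr (fun h => haNot (h ▸ Finset.mem_univ a))
    have := Finset.card_lt_card this
    simpa using this
end

section
/- If N players round-robin explore C unit-capacity arms using shifted orderings (player p_i follows ordering i, i+1, ..., C, 1, 2, ..., skipping unavailable arms), with N ≤ C, then no two players propose to the same arm in the same round, and every player is matched with each of its available arms at least once in every C consecutive rounds. -/
/-- round-robin exploration with shifted orderings.  There are `C`
unit-capacity arms and `N ≤ C` players; at round `t`, player `i` proposes to the arm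
with (0-indexed) number `(i + t) % C` when that arm is available for it, and abstains
otherwise.  Then (1) no two players target the same arm in the same round, so every
proposal is accepted, and (2) every player is matched with each of its available arms at
least once in every `C` consecutive rounds. -/
theorem round_robin_shifted (N C : ℕ) (hC : 0 < C) (hNC : N ≤ C)
    (avail : Fin N → Finset (Fin C)) :
    (∀ (t : ℕ) (i i' : Fin N), i ≠ i' → ((i : ℕ) + t) % C ≠ ((i' : ℕ) + t) % C) ∧
    (∀ (i : Fin N), ∀ a ∈ avail i, ∀ t₀ : ℕ,
      ∃ t, t₀ ≤ t ∧ t < t₀ + C ∧ ((i : ℕ) + t) % C = (a : ℕ)) := by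
  constructor
  · intro t i i' hne h
    apply hne
    have hmod : (i : ℕ) % C = (i' : ℕ) % C :=
      (Nat.ModEq.add_right_cancel' t h : Nat.ModEq C i i')
    have hi : (i : ℕ) < C := lt_of_lt_of_le i.isLt hNC
    have hi' : (i' : ℕ) < C := lt_of_lt_of_le i'.isLt hNC
    rw [Nat.mod_eq_of_lt hi, Nat.mod_eq_of_lt hi'] at hmod
    exact Fin.ext hmod
  · intro i a _ t₀
    set s := ((i : ℕ) + t₀) % C with hs
    have hsC : s < C := Nat.mod_lt _ hC
    refine ⟨t₀ + ((a : ℕ) + C - s) % C, Nat.le_add_right _ _, ?_, ?_⟩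
    · have : ((a : ℕ) + C - s) % C < C := Nat.mod_lt _ hC
      omega
    · have hle : s ≤ (a : ℕ) + C := by omega
      rw [← Nat.add_assoc, Nat.add_mod, Nat.mod_mod_of_dvd _ dvd_rfl, ← hs,
        Nat.add_mod_mod, Nat.add_sub_cancel' hle, Nat.add_mod_right,
        Nat.mod_eq_of_lt a.isLt]
end
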